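/- arXiv:1906.03590 — 3 statements merged into one kernel-verified Lean document; each statement's English description precedes it below -/
import Mathlib

section
/- Let f : ℝⁿ → ℝⁿ be locally Lipschitz with f(0) = 0, and suppose every initial point x in a set S gives a solution φ(x,·) of φ' = f(φ), φ(x,0)=x converging to 0. Define V(x) = ∫₀^∞ α(‖φ(x,t)‖) dt for a continuous strictly increasing α with α(0)=0, assuming the integral is finite on S. Then for any c > 0, the sublevel set Ω_c = {x : V(x) ≤ c} is contained in S. -/
open MeasureTheory Set Filter

theorem sublevel_subset_roa (n : ℕ)
    (f : EuclideanSpace ℝ (Fin n) → EuclideanSpace ℝ (Fin n))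
    (φ : EuclideanSpace ℝ (Fin n) → ℝ → EuclideanSpace ℝ (Fin n))
    (α : ℝ → ℝ)
    (hf : LocallyLipschitz f) (hf0 : f 0 = 0)
    (hα_cont : ContinuousOn α (Ici 0))
    (hα_mono : StrictMonoOn α (Ici 0))
    (hα0 : α 0 = 0)
    -- φ(x,·) solves the ODE with initial condition x, and is uniformly continuous
    (hode : ∀ x, ∀ t, 0 ≤ t → HasDerivAt (φ x) (f (φ x t)) t)
    (hinit : ∀ x, φ x 0 = x)
    (hUC : ∀ x, UniformContinuous (φ x))
    -- S is the region of attraction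
    (S : Set (EuclideanSpace ℝ (Fin n)))
    (hS : S = {x | Tendsto (fun t => φ x t) atTop (nhds 0)})
    -- V is finite on S
    (hfin : ∀ x ∈ S, IntegrableOn (fun t => α ‖φ x t‖) (Ioi 0)) :
    ∀ c : ℝ, 0 < c →
      {x | IntegrableOn (fun t => α ‖φ x t‖) (Ioi 0) ∧
        ∫ t in Ioi 0, α ‖φ x t‖ ≤ c} ⊆ S := by
  intro c hc x hx
  obtain ⟨hint, -⟩ := hx
  rw [hS]
  simp only [mem_setOf_eq]
  -- nonnegativity of the integrand
  have hg0 : ∀ s : ℝ, 0 ≤ α ‖φ x s‖ := fun s => by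
    rw [← hα0]
    exact hα_mono.monotoneOn (self_mem_Ici) (norm_nonneg _) (norm_nonneg _)
  by_contra hnot
  rw [NormedAddCommGroup.tendsto_nhds_zero] at hnot
  push_neg at hnot
  obtain ⟨ε, hε, hfreq⟩ := hnot
  -- uniform continuity
  obtain ⟨δ, hδ, hδ'⟩ := Metric.uniformContinuous_iff.mp (hUC x) (ε / 2) (by positivity)
  have hαε : 0 < α (ε / 2) := by
    rw [← hα0]
    exact hα_mono self_mem_Ici (by positivity : (0:ℝ) ≤ ε / 2) (by positivity)
  set b : ℝ := δ / 2 * α (ε / 2) with hb_def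
  have hb : 0 < b := by positivity
  -- tail integrals tend to zero
  have htail : Tendsto (fun i : ℕ => ∫ t in Ioi (i : ℝ), α ‖φ x t‖) atTop (nhds 0) := by
    have h := Antitone.tendsto_setIntegral (μ := volume)
      (s := fun i : ℕ => Ioi (i : ℝ)) (f := fun t => α ‖φ x t‖)
      (fun i => measurableSet_Ioi)
      (fun i j hij => Ioi_subset_Ioi (by exact_mod_cast hij))
      (by simpa using hint)
    have hempty : ⋂ i : ℕ, Ioi ((i : ℕ) : ℝ) = (∅ : Set ℝ) := by
      ext y
      simp only [mem_iInter, mem_Ioi, mem_empty_iff_false, iff_false]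
      push_neg
      obtain ⟨k, hk⟩ := exists_nat_gt y
      exact ⟨k, hk.le⟩
    rwa [hempty, Measure.restrict_empty, integral_zero_measure] at h
  obtain ⟨N, hN⟩ := (htail.eventually (gt_mem_nhds hb)).exists
  -- find a time t ≥ N where the solution is far from 0
  obtain ⟨t, ht, ht_ge⟩ := (hfreq.and_eventually (eventually_ge_atTop ((N : ℝ)))).exists
  -- on the interval Ioc t (t + δ/2), the integrand is at least α (ε/2)
  have hIsub : Ioc t (t + δ / 2) ⊆ Ioi (N : ℝ) := fun s hs => lt_of_le_of_lt ht_ge hs.1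
  have hI0 : Ioc t (t + δ / 2) ⊆ Ioi (0 : ℝ) := fun s hs =>
    lt_of_le_of_lt (le_trans (Nat.cast_nonneg N) ht_ge) hs.1
  have hintN : IntegrableOn (fun s => α ‖φ x s‖) (Ioi (N : ℝ)) := by
    exact hint.mono_set (Ioi_subset_Ioi (Nat.cast_nonneg N))
  have hintI : IntegrableOn (fun s => α ‖φ x s‖) (Ioc t (t + δ / 2)) :=
    hint.mono_set hI0
  have hlow : ∀ s ∈ Ioc t (t + δ / 2), α (ε / 2) ≤ α ‖φ x s‖ := by
    intro s hs
    have hdist : dist s t < δ := by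
      rw [Real.dist_eq, abs_of_nonneg (by linarith [hs.1.le] : 0 ≤ s - t)]
      have := hs.2
      linarith
    have h1 : dist (φ x s) (φ x t) < ε / 2 := hδ' hdist
    have h2 : ε / 2 ≤ ‖φ x s‖ := by
      have := norm_sub_norm_le (φ x t) (φ x s)
      rw [dist_comm, dist_eq_norm] at h1
      linarith [ht]
    exact hα_mono.monotoneOn (by positivity : (0:ℝ) ≤ ε / 2) (norm_nonneg _) h2
  have hlb : α (ε / 2) * (δ / 2) ≤ ∫ s in Ioc t (t + δ / 2), α ‖φ x s‖ := by
    have := setIntegral_ge_of_const_le (μ := volume) measurableSet_Ioc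
      (by simp [Real.volume_Ioc]) hlow hintI
    have hvol : ((volume (Ioc t (t + δ / 2))).toReal) = δ / 2 := by
      rw [Real.volume_Ioc]
      simp
      linarith
    rwa [measureReal_def, hvol, smul_eq_mul, mul_comm] at this
  have hmono : (∫ s in Ioc t (t + δ / 2), α ‖φ x s‖) ≤ ∫ s in Ioi (N : ℝ), α ‖φ x s‖ := by
    apply setIntegral_mono_set hintN
    · exact Eventually.of_forall fun s => hg0 s
    · exact HasSubset.Subset.eventuallyLE hIsub
  have : b ≤ ∫ s in Ioi (N : ℝ), α ‖φ x s‖ := by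
    rw [hb_def, mul_comm]
    exact le_trans hlb hmono
  linarith [hN]
end

section
/- Combining the trapezoidal error bound and exponential tail bound: if |∂²_t α(‖φ(x,t)‖)| ≤ κ on [0, t_n], the trajectory decays exponentially as ‖φ(x,t)‖ ≤ η‖φ(x,t_n)‖e^{−λ(t−t_n)} for t ≥ t_n, and α(z) ≤ z^m, then |V(x) − V̂(x)| ≤ κ n (Δt)³/12 + η^m ‖φ(x,t_n)‖^m/(mλ), where V(x) = ∫₀^∞ α(‖φ(x,t)‖)dt and V̂(x) is the trapezoidal discretization on [0, t_n] with step Δt = t_n/n. -/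
open MeasureTheory Set Finset

lemma mono_aux {f f' : ℝ → ℝ} {c : ℝ}
    (hd : ∀ x ∈ Icc (0:ℝ) c, HasDerivAt f (f' x) x)
    (h0 : f 0 = 0) (hpos : ∀ x ∈ Icc (0:ℝ) c, 0 ≤ f' x) :
    ∀ x ∈ Icc (0:ℝ) c, 0 ≤ f x := by
  intro x hx
  have hmono : MonotoneOn f (Icc (0:ℝ) c) := by
    apply monotoneOn_of_deriv_nonneg (convex_Icc 0 c)
    · exact fun y hy => (hd y hy).continuousAt.continuousWithinAt
    · intro y hy
      rw [interior_Icc] at hy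
      exact ((hd y (Ioo_subset_Icc_self hy)).differentiableAt).differentiableWithinAt
    · intro y hy
      rw [interior_Icc] at hy
      rw [(hd y (Ioo_subset_Icc_self hy)).deriv]
      exact hpos y (Ioo_subset_Icc_self hy)
  have h0c : (0:ℝ) ∈ Icc (0:ℝ) c := left_mem_Icc.mpr (hx.1.trans hx.2)
  have := hmono h0c hx hx.1
  rw [h0] at this; exact this

lemma trap_one {g g' g'' : ℝ → ℝ} {κ : ℝ} (a b : ℝ) (hab : a ≤ b) (hκ : 0 ≤ κ)
    (hgc : Continuous g)
    (hg' : ∀ t ∈ Icc a b, HasDerivAt g (g' t) t)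
    (hg'' : ∀ t ∈ Icc a b, HasDerivAt g' (g'' t) t)
    (hbd : ∀ t ∈ Icc a b, |g'' t| ≤ κ) :
    |(∫ t in a..b, g t) - (b - a) * (g a + g b) / 2| ≤ κ * (b - a) ^ 3 / 12 := by
  set c := b - a with hc
  have hc0 : 0 ≤ c := by simp [hc]; linarith
  have hmem : ∀ h ∈ Icc (0:ℝ) c, a + h ∈ Icc a b := by
    intro h hh; constructor <;> [linarith [hh.1]; linarith [hh.2]]
  set E : ℝ → ℝ := fun h => (∫ t in a..(a+h), g t) - h * (g a + g (a+h)) / 2 with hE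
  set E1 : ℝ → ℝ := fun h => (g (a+h) - g a) / 2 - h * g' (a+h) / 2 with hE1
  have hshift : ∀ h : ℝ, HasDerivAt (fun x : ℝ => a + x) 1 h :=
    fun h => (hasDerivAt_id h).const_add a
  have hdE : ∀ h ∈ Icc (0:ℝ) c, HasDerivAt E (E1 h) h := by
    intro h hh
    have hF : HasDerivAt (fun u => ∫ t in a..u, g t) (g (a+h)) (a+h) :=
      intervalIntegral.integral_hasDerivAt_right (hgc.intervalIntegrable a (a+h))
        hgc.stronglyMeasurable.stronglyMeasurableAtFilter hgc.continuousAt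
    have h1 : HasDerivAt (fun x : ℝ => ∫ t in a..(a+x), g t) (g (a+h) * 1) h :=
      hF.comp h (hshift h)
    have h2 : HasDerivAt (fun x : ℝ => g (a+x)) (g' (a+h) * 1) h :=
      (hg' _ (hmem h hh)).comp h (hshift h)
    have h3 : HasDerivAt (fun x : ℝ => x * (g a + g (a+x)) / 2)
        ((1 * (g a + g (a+h)) + h * (g' (a+h) * 1)) / 2) h :=
      ((hasDerivAt_id h).mul (h2.const_add (g a))).div_const 2
    have := h1.sub h3
    refine this.congr_deriv ?_
    ring
  have hdE1 : ∀ h ∈ Icc (0:ℝ) c, HasDerivAt E1 (-(h * g'' (a+h)) / 2) h := by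
    intro h hh
    have h2 : HasDerivAt (fun x : ℝ => g (a+x)) (g' (a+h) * 1) h :=
      (hg' _ (hmem h hh)).comp h (hshift h)
    have h2' : HasDerivAt (fun x : ℝ => g' (a+x)) (g'' (a+h) * 1) h :=
      (hg'' _ (hmem h hh)).comp h (hshift h)
    have h4 : HasDerivAt (fun x : ℝ => (g (a+x) - g a) / 2) (g' (a+h) * 1 / 2) h :=
      (h2.sub_const (g a)).div_const 2
    have h5 : HasDerivAt (fun x : ℝ => x * g' (a+x) / 2)
        ((1 * g' (a+h) + h * (g'' (a+h) * 1)) / 2) h :=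
      ((hasDerivAt_id h).mul h2').div_const 2
    have := h4.sub h5
    refine this.congr_deriv ?_
    ring
  have hbd' : ∀ h ∈ Icc (0:ℝ) c, |g'' (a+h)| ≤ κ := fun h hh => hbd _ (hmem h hh)
  have hP : ∀ h ∈ Icc (0:ℝ) c, 0 ≤ κ * h^2 / 4 - E1 h := by
    apply mono_aux (f' := fun h => κ * h / 2 - (-(h * g'' (a+h)) / 2))
    · intro x hx
      have : HasDerivAt (fun h => κ * h^2 / 4) (κ * (2 * x^(2-1) * 1) / 4) x :=
        (((hasDerivAt_id x).pow 2).const_mul κ).div_const 4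
      have := this.sub (hdE1 x hx)
      refine this.congr_deriv ?_
      beta_reduce
      ring
    · simp [hE1]
    · intro x hx
      have := (abs_le.mp (hbd' x hx)).1
      nlinarith [mul_nonneg hx.1 (by linarith : (0:ℝ) ≤ κ + g'' (a+x))]
  have hQ : ∀ h ∈ Icc (0:ℝ) c, 0 ≤ κ * h^2 / 4 + E1 h := by
    apply mono_aux (f' := fun h => κ * h / 2 + (-(h * g'' (a+h)) / 2))
    · intro x hx
      have : HasDerivAt (fun h => κ * h^2 / 4) (κ * (2 * x^(2-1) * 1) / 4) x :=
        (((hasDerivAt_id x).pow 2).const_mul κ).div_const 4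
      have := this.add (hdE1 x hx)
      refine this.congr_deriv ?_
      beta_reduce
      ring
    · simp [hE1]
    · intro x hx
      have := (abs_le.mp (hbd' x hx)).2
      nlinarith [mul_nonneg hx.1 (by linarith : (0:ℝ) ≤ κ - g'' (a+x))]
  have hR : ∀ h ∈ Icc (0:ℝ) c, 0 ≤ κ * h^3 / 12 - E h := by
    apply mono_aux (f' := fun h => κ * h^2 / 4 - E1 h)
    · intro x hx
      have : HasDerivAt (fun h => κ * h^3 / 12) (κ * (3 * x^(3-1) * 1) / 12) x :=
        (((hasDerivAt_id x).pow 3).const_mul κ).div_const 12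
      have := this.sub (hdE x hx)
      refine this.congr_deriv ?_
      beta_reduce
      ring
    · simp [hE]
    · exact hP
  have hS : ∀ h ∈ Icc (0:ℝ) c, 0 ≤ κ * h^3 / 12 + E h := by
    apply mono_aux (f' := fun h => κ * h^2 / 4 + E1 h)
    · intro x hx
      have : HasDerivAt (fun h => κ * h^3 / 12) (κ * (3 * x^(3-1) * 1) / 12) x :=
        (((hasDerivAt_id x).pow 3).const_mul κ).div_const 12
      have := this.add (hdE x hx)
      refine this.congr_deriv ?_
      beta_reduce
      ring
    · simp [hE]
    · exact hQ
  have hcc : c ∈ Icc (0:ℝ) c := right_mem_Icc.mpr hc0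
  have h1 := hR c hcc
  have h2 := hS c hcc
  have hac : a + c = b := by rw [hc]; ring
  have hEc : E c = (∫ t in a..b, g t) - (b - a) * (g a + g b) / 2 := by
    simp only [hE, hac, hc, add_sub_cancel]
  rw [hEc] at h1 h2
  rw [abs_le]
  constructor <;> linarith

lemma exp_shift_integral (tn b : ℝ) (hb : 0 < b) :
    ∫ t in Ioi tn, Real.exp (-b * (t - tn)) = 1 / b := by
  have hd : ∀ x ∈ Ici tn, HasDerivAt (fun t => -Real.exp (-b * (t - tn)) / b)
      (Real.exp (-b * (x - tn))) x := by
    intro x _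
    have h1 : HasDerivAt (fun t : ℝ => -b * (t - tn)) (-b) x := by
      simpa using ((hasDerivAt_id x).sub_const tn).const_mul (-b)
    have := ((h1.exp).div_const b).neg
    rw [show (fun t => -Real.exp (-b * (t - tn)) / b) = -fun x => Real.exp (-b * (x - tn)) / b from by funext t; rw [Pi.neg_apply, neg_div]]
    refine this.congr_deriv ?_
    rw [mul_neg, neg_div, neg_neg, mul_div_assoc, div_self hb.ne', mul_one]
  have hInt : IntegrableOn (fun t => Real.exp (-b * (t - tn))) (Ioi tn) := by
    have h : IntegrableOn (fun t => Real.exp (b * tn) * Real.exp (-b * t)) (Ioi tn) :=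
      (exp_neg_integrableOn_Ioi tn hb).const_mul _
    exact h.congr_fun (fun t _ => by dsimp only; rw [← Real.exp_add]; ring_nf) measurableSet_Ioi
  have htend : Filter.Tendsto (fun t => -Real.exp (-b * (t - tn)) / b) Filter.atTop (nhds 0) := by
    have h1 : Filter.Tendsto (fun t : ℝ => -b * (t - tn)) Filter.atTop Filter.atBot := by
      apply Filter.Tendsto.const_mul_atTop_of_neg (by linarith : -b < 0)
      exact Filter.tendsto_atTop_add_const_right _ (-tn) Filter.tendsto_id
    have := (Real.tendsto_exp_atBot.comp h1).neg.div_const b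
    simpa using this
  have := integral_Ioi_of_hasDerivAt_of_tendsto' hd hInt htend
  rw [this]
  rw [sub_self, mul_zero, Real.exp_zero]; ring

theorem discretization_error_bound (N : ℕ) (φ : ℝ → EuclideanSpace ℝ (Fin N))
    (α g g' g'' : ℝ → ℝ) (n : ℕ) (Δt tn κ η lam m : ℝ)
    (hn : 1 ≤ n) (hΔt : 0 < Δt) (htn : tn = n * Δt)
    (hκ : 0 ≤ κ) (hη : 0 < η) (hlam : 0 < lam) (hm : 0 < m)
    (hφ : Continuous φ)
    (hα_cont : ContinuousOn α (Ici 0))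
    (hα_mono : StrictMonoOn α (Ici 0))
    (hα0 : α 0 = 0)
    (hα_bd : ∀ z : ℝ, 0 ≤ z → α z ≤ z ^ m)
    (hg : ∀ t, g t = α ‖φ t‖)
    -- t ↦ α(‖φ(t)‖) is C² on [0, t_n] with second derivative bounded by κ
    (hg' : ∀ t ∈ Icc (0 : ℝ) tn, HasDerivAt g (g' t) t)
    (hg'' : ∀ t ∈ Icc (0 : ℝ) tn, HasDerivAt g' (g'' t) t)
    (hbd : ∀ t ∈ Icc (0 : ℝ) tn, |g'' t| ≤ κ)
    -- exponential decay of the trajectory after t_n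
    (hdecay : ∀ t : ℝ, tn ≤ t → ‖φ t‖ ≤ η * ‖φ tn‖ * Real.exp (-lam * (t - tn)))
    -- the converse Lyapunov value is well defined
    (hint : IntegrableOn g (Ioi 0)) :
    |(∫ t in Ioi (0 : ℝ), g t) -
        Δt * ∑ i ∈ Finset.range n, (g (i * Δt) + g ((i + 1) * Δt)) / 2| ≤
      κ * n * Δt ^ 3 / 12 + η ^ m * ‖φ tn‖ ^ m / (m * lam) := by
  have hgc : Continuous g := by
    have : Continuous (fun t => α ‖φ t‖) :=
      hα_cont.comp_continuous (continuous_norm.comp hφ) (fun t => norm_nonneg _)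
    simpa [funext hg] using this
  have hn' : (1:ℝ) ≤ n := by exact_mod_cast hn
  have htn_pos : 0 < tn := by rw [htn]; nlinarith
  have hIoc : IntegrableOn g (Ioc 0 tn) := hint.mono_set Ioc_subset_Ioi_self
  have hIoi : IntegrableOn g (Ioi tn) := hint.mono_set (Ioi_subset_Ioi htn_pos.le)
  have hsplit : (∫ t in Ioi (0:ℝ), g t) = (∫ t in (0:ℝ)..tn, g t) + ∫ t in Ioi tn, g t := by
    rw [intervalIntegral.integral_of_le htn_pos.le,
      ← Ioc_union_Ioi_eq_Ioi htn_pos.le,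
      setIntegral_union (Ioc_disjoint_Ioi le_rfl) measurableSet_Ioi hIoc hIoi]
  -- the trapezoidal part
  have hadj : (∫ t in (0:ℝ)..tn, g t)
      = ∑ i ∈ Finset.range n, ∫ t in ((i:ℝ)*Δt)..(((i:ℝ)+1)*Δt), g t := by
    have h := intervalIntegral.sum_integral_adjacent_intervals
      (a := fun i : ℕ => (i:ℝ)*Δt) (n := n) (μ := volume) (fun k _ => hgc.intervalIntegrable _ _)
    push_cast at h
    simp only [zero_mul] at h
    rw [htn, ← h]
  have htrap : |(∫ t in (0:ℝ)..tn, g t)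
      - Δt * ∑ i ∈ Finset.range n, (g (i * Δt) + g ((i + 1) * Δt)) / 2|
      ≤ κ * n * Δt^3/12 := by
    rw [hadj, Finset.mul_sum, ← Finset.sum_sub_distrib]
    refine (Finset.abs_sum_le_sum_abs _ _).trans ?_
    have hb : ∀ i ∈ Finset.range n,
        |(∫ t in ((i:ℝ)*Δt)..(((i:ℝ)+1)*Δt), g t)
          - Δt * ((g (i*Δt) + g ((i+1)*Δt))/2)| ≤ κ * Δt^3 / 12 := by
      intro i hi
      have hin : (i:ℝ) + 1 ≤ n := by exact_mod_cast Nat.succ_le_of_lt (Finset.mem_range.mp hi)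
      have hi0 : (0:ℝ) ≤ (i:ℝ) := Nat.cast_nonneg i
      have hsub : Icc ((i:ℝ)*Δt) (((i:ℝ)+1)*Δt) ⊆ Icc 0 tn := by
        apply Set.Icc_subset_Icc
        · positivity
        · rw [htn]; nlinarith
      have h := trap_one ((i:ℝ)*Δt) (((i:ℝ)+1)*Δt) (by nlinarith) hκ hgc
        (fun t ht => hg' t (hsub ht)) (fun t ht => hg'' t (hsub ht))
        (fun t ht => hbd t (hsub ht))
      have e1 : ((i:ℝ)+1)*Δt - (i:ℝ)*Δt = Δt := by ring
      rw [e1] at h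
      rw [show Δt * ((g ((i:ℝ)*Δt) + g (((i:ℝ)+1)*Δt))/2)
          = Δt * (g ((i:ℝ)*Δt) + g (((i:ℝ)+1)*Δt)) / 2 from by ring]
      exact h
    refine (Finset.sum_le_sum hb).trans ?_
    rw [Finset.sum_const, Finset.card_range, nsmul_eq_mul]
    ring_nf
    exact le_refl _
  -- the tail
  have hg_nonneg : ∀ t, 0 ≤ g t := by
    intro t
    rw [hg t, ← hα0]
    exact hα_mono.monotoneOn self_mem_Ici (norm_nonneg _) (norm_nonneg _)
  set b := m * lam with hbdef
  have hbpos : 0 < b := mul_pos hm hlam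
  set C := η ^ m * ‖φ tn‖ ^ m with hC
  have hC0 : 0 ≤ C := by
    rw [hC]
    exact mul_nonneg (Real.rpow_nonneg hη.le _) (Real.rpow_nonneg (norm_nonneg _) _)
  have hgle : ∀ t ∈ Ioi tn, g t ≤ C * Real.exp (-b * (t - tn)) := by
    intro t ht
    have ht' : tn ≤ t := le_of_lt ht
    have h1 : g t ≤ ‖φ t‖ ^ m := by rw [hg t]; exact hα_bd _ (norm_nonneg _)
    have h2 : ‖φ t‖ ^ m ≤ (η * ‖φ tn‖ * Real.exp (-lam * (t - tn))) ^ m :=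
      Real.rpow_le_rpow (norm_nonneg _) (hdecay t ht') hm.le
    have h3 : (η * ‖φ tn‖ * Real.exp (-lam * (t - tn))) ^ m = C * Real.exp (-b * (t - tn)) := by
      rw [Real.mul_rpow (by positivity) (Real.exp_nonneg _),
        Real.mul_rpow hη.le (norm_nonneg _), ← Real.exp_mul, hC, hbdef]
      congr 1
      ring
    calc g t ≤ ‖φ t‖ ^ m := h1
      _ ≤ (η * ‖φ tn‖ * Real.exp (-lam * (t - tn))) ^ m := h2
      _ = C * Real.exp (-b * (t - tn)) := h3
  have hIntb : IntegrableOn (fun t => C * Real.exp (-b * (t - tn))) (Ioi tn) := by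
    have h : IntegrableOn (fun t => Real.exp (-b * (t - tn))) (Ioi tn) := by
      have h' : IntegrableOn (fun t => Real.exp (b * tn) * Real.exp (-b * t)) (Ioi tn) :=
        (exp_neg_integrableOn_Ioi tn hbpos).const_mul _
      exact h'.congr_fun (fun t _ => by dsimp only; rw [← Real.exp_add]; ring_nf) measurableSet_Ioi
    exact h.const_mul C
  have htail : |∫ t in Ioi tn, g t| ≤ C / b := by
    rw [abs_of_nonneg (setIntegral_nonneg measurableSet_Ioi (fun t _ => hg_nonneg t))]
    have hle := setIntegral_mono_on hIoi hIntb measurableSet_Ioi hgle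
    rw [integral_const_mul, exp_shift_integral tn b hbpos] at hle
    calc (∫ t in Ioi tn, g t) ≤ C * (1 / b) := hle
      _ = C / b := by ring
  rw [hsplit, add_sub_right_comm]
  exact (abs_add_le _ _).trans (add_le_add htrap htail)
end

section
/- Let h : [0,∞) → ℝⁿ satisfy ‖h(t)‖ ≤ η e^{−λt} with η, λ > 0, and let α be continuous, increasing, α(0)=0, with α(z) ≤ z^m for some m > 0. Then the function t ↦ α(‖h(t)‖) is integrable on [0,∞) and ∫₀^∞ α(‖h(t)‖) dt ≤ η^m/(mλ). -/
open MeasureTheory Set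

lemma integral_exp_neg_mul_Ioi_zero {b : ℝ} (hb : 0 < b) :
    ∫ x in Ioi (0 : ℝ), Real.exp (-b * x) = 1 / b := by
  have := MeasureTheory.integral_comp_mul_left_Ioi (fun x => Real.exp (-x)) 0 hb
  simp only [mul_zero, smul_eq_mul] at this
  have h2 : (fun x : ℝ => Real.exp (-(b * x))) = fun x : ℝ => Real.exp (-b * x) := by
    funext x; ring_nf
  rw [h2] at this
  rw [this, integral_exp_neg_Ioi_zero]
  field_simp

theorem converse_lyapunov_finite (n : ℕ) (h : ℝ → EuclideanSpace ℝ (Fin n))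
    (α : ℝ → ℝ) (η lam m : ℝ)
    (hη : 0 < η) (hlam : 0 < lam) (hm : 0 < m)
    (hh : Continuous h)
    (hα_cont : ContinuousOn α (Ici 0))
    (hα_mono : MonotoneOn α (Ici 0))
    (hα0 : α 0 = 0)
    (hα_bd : ∀ z : ℝ, 0 ≤ z → α z ≤ z ^ m)
    (hdecay : ∀ t : ℝ, 0 ≤ t → ‖h t‖ ≤ η * Real.exp (-lam * t)) :
    IntegrableOn (fun t => α ‖h t‖) (Ioi 0) ∧
      ∫ t in Ioi (0 : ℝ), α ‖h t‖ ≤ η ^ m / (m * lam) := by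
  have hmlam : 0 < m * lam := mul_pos hm hlam
  -- dominating function
  set g : ℝ → ℝ := fun t => η ^ m * Real.exp (-(m * lam) * t) with hg
  have hgint : IntegrableOn g (Ioi 0) :=
    (exp_neg_integrableOn_Ioi 0 hmlam).const_mul _
  have hcont : Continuous fun t => α ‖h t‖ :=
    hα_cont.comp_continuous hh.norm (fun t => norm_nonneg _)
  have hnonneg : ∀ t : ℝ, 0 ≤ α ‖h t‖ := by
    intro t
    rw [← hα0]
    exact hα_mono (le_refl (0:ℝ)) (norm_nonneg _) (norm_nonneg _)
  have hbound : ∀ t ∈ Ioi (0:ℝ), α ‖h t‖ ≤ g t := by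
    intro t ht
    have ht0 : (0:ℝ) ≤ t := le_of_lt ht
    have h1 : α ‖h t‖ ≤ α (η * Real.exp (-lam * t)) :=
      hα_mono (norm_nonneg _)
        (le_of_lt (mul_pos hη (Real.exp_pos _))) (hdecay t ht0)
    have h2 : α (η * Real.exp (-lam * t)) ≤ (η * Real.exp (-lam * t)) ^ m :=
      hα_bd _ (le_of_lt (mul_pos hη (Real.exp_pos _)))
    have h3 : (η * Real.exp (-lam * t)) ^ m = g t := by
      rw [Real.mul_rpow (le_of_lt hη) (le_of_lt (Real.exp_pos _)),
        ← Real.exp_mul]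
      simp only [hg]
      ring_nf
    linarith
  have hint : IntegrableOn (fun t => α ‖h t‖) (Ioi 0) := by
    apply hgint.mono' (hcont.aestronglyMeasurable.restrict)
    filter_upwards [ae_restrict_mem measurableSet_Ioi] with t ht
    rw [Real.norm_of_nonneg (hnonneg t)]
    exact hbound t ht
  refine ⟨hint, ?_⟩
  calc ∫ t in Ioi (0:ℝ), α ‖h t‖ ≤ ∫ t in Ioi (0:ℝ), g t :=
        setIntegral_mono_on hint hgint measurableSet_Ioi hbound
    _ = η ^ m * (1 / (m * lam)) := by
        simp only [hg]
        rw [integral_const_mul, integral_exp_neg_mul_Ioi_zero hmlam]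
    _ = η ^ m / (m * lam) := by ring
end
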